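/- arXiv:2005.09229 — 5 statements merged into one kernel-verified Lean document; each statement's English description precedes it below -/
import Mathlib

section
/- Let Θ be a symmetric n×n real matrix with nonnegative entries, Ω a symmetric k×k real matrix with nonnegative entries, S an n×k real matrix with nonnegative entries, and S' an n×k real matrix with strictly positive entries. Then Σ_{i=1}^n Σ_{s=1}^k ( (Θ S' Ω)_{is} · S_{is}² ) / S'_{is} ≥ Tr( Sᵀ Θ S Ω ). -/
/-!
Vectorising, `Tr(Sᵀ Θ S Ω) = vec S ⬝ᵥ (Ω ⊗ₖ Θ) *ᵥ vec S`, so the claim is an instance of a bound on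
the quadratic form of any symmetric nonnegative matrix `W`: for `p > 0`,
`xᵀ W x ≤ ∑ₐ (W p)ₐ xₐ² / pₐ`. This follows by summing the weighted AM-GM inequalities
`2 Wₐᵦ xₐ xᵦ ≤ Wₐᵦ (pᵦ xₐ² / pₐ + pₐ xᵦ² / pᵦ)` over all pairs and using `Wₐᵦ = Wᵦₐ`.
-/

open Matrix
open scoped Kronecker

theorem two_mul_le_mul_sq_div_add_mul_sq_div {p q : ℝ} (hp : 0 < p) (hq : 0 < q) (u v : ℝ) :
    2 * u * v ≤ q * u ^ 2 / p + p * v ^ 2 / q := by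
  rw [div_add_div _ _ hp.ne' hq.ne', le_div_iff₀ (mul_pos hp hq)]
  nlinarith [sq_nonneg (u * q - v * p)]

theorem Matrix.IsSymm.dotProduct_mulVec_le_sum_mulVec_mul_sq_div {α : Type*} [Fintype α]
    {W : Matrix α α ℝ} (hW : W.IsSymm) (hW₀ : ∀ a b, 0 ≤ W a b) (x : α → ℝ) {p : α → ℝ}
    (hp : ∀ a, 0 < p a) :
    x ⬝ᵥ W *ᵥ x ≤ ∑ a, (W *ᵥ p) a * x a ^ 2 / p a := by
  set Q : α → α → ℝ := fun a b => x a * (W a b * x b)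
  set T : α → α → ℝ := fun a b => W a b * p b * x a ^ 2 / p a
  have hpair : ∀ a b, 2 * Q a b ≤ T a b + T b a := fun a b => calc
    2 * Q a b = W a b * (2 * x a * x b) := by ring
    _ ≤ W a b * (p b * x a ^ 2 / p a + p a * x b ^ 2 / p b) :=
      mul_le_mul_of_nonneg_left
        (two_mul_le_mul_sq_div_add_mul_sq_div (hp a) (hp b) (x a) (x b)) (hW₀ a b)
    _ = T a b + T b a := by simp only [T, hW.apply a b]; ring
  have hsum : 2 * ∑ a, ∑ b, Q a b ≤ ∑ a, ∑ b, T a b + ∑ a, ∑ b, T b a := by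
    simp only [Finset.mul_sum, ← Finset.sum_add_distrib]
    gcongr with a _ b _
    exact hpair a b
  have hlhs : x ⬝ᵥ W *ᵥ x = ∑ a, ∑ b, Q a b := by
    simp only [Q, dotProduct, mulVec, Finset.mul_sum]
  have hrhs : ∑ a, (W *ᵥ p) a * x a ^ 2 / p a = ∑ a, ∑ b, T a b := by
    simp only [T, mulVec, dotProduct, Finset.sum_mul, Finset.sum_div]
  rw [Finset.sum_comm (f := fun a b => T b a)] at hsum
  rw [hlhs, hrhs]
  linarith

theorem Matrix.IsSymm.kronecker {α m n : Type*} [CommMagma α] {A : Matrix m m α}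
    {B : Matrix n n α} (hA : A.IsSymm) (hB : B.IsSymm) : (A ⊗ₖ B).IsSymm := by
  rw [IsSymm, ← kroneckerMap_transpose, hA.eq, hB.eq]

theorem ding_li_jordan_inequality_general (n k : ℕ)
    (Θ : Matrix (Fin n) (Fin n) ℝ) (hΘsymm : Θ.IsSymm) (hΘ : ∀ i j, 0 ≤ Θ i j)
    (Ω : Matrix (Fin k) (Fin k) ℝ) (hΩsymm : Ω.IsSymm) (hΩ : ∀ i j, 0 ≤ Ω i j)
    (S : Matrix (Fin n) (Fin k) ℝ)
    (S' : Matrix (Fin n) (Fin k) ℝ) (hS' : ∀ i j, 0 < S' i j) :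
    Matrix.trace (Sᵀ * Θ * S * Ω)
      ≤ ∑ i, ∑ s, (Θ * S' * Ω) i s * (S i s) ^ 2 / S' i s := by
  have hvec : ∀ X : Matrix (Fin n) (Fin k) ℝ, (Ω ⊗ₖ Θ) *ᵥ vec X = vec (Θ * X * Ω) := fun X => by
    rw [kronecker_mulVec_vec, hΩsymm.eq]
  have hlhs : trace (Sᵀ * Θ * S * Ω) = vec S ⬝ᵥ (Ω ⊗ₖ Θ) *ᵥ vec S := by
    rw [hvec, vec_dotProduct_vec, Matrix.mul_assoc, Matrix.mul_assoc, Matrix.mul_assoc]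
  have hrhs : ∑ i, ∑ s, (Θ * S' * Ω) i s * (S i s) ^ 2 / S' i s
      = ∑ a, ((Ω ⊗ₖ Θ) *ᵥ vec S') a * vec S a ^ 2 / vec S' a := by
    rw [hvec, Fintype.sum_prod_type, Finset.sum_comm]
    rfl
  rw [hlhs, hrhs]
  exact (hΩsymm.kronecker hΘsymm).dotProduct_mulVec_le_sum_mulVec_mul_sq_div
    (fun _ _ => mul_nonneg (hΩ _ _) (hΘ _ _)) _ fun a => hS' a.2 a.1

/-- Ding–Li–Jordan inequality: for symmetric nonnegative Θ, Ω, nonnegative S and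
strictly positive S', Σᵢₛ (Θ S' Ω)ᵢₛ Sᵢₛ² / S'ᵢₛ ≥ Tr(Sᵀ Θ S Ω). -/
theorem ding_li_jordan_inequality (n k : ℕ)
    (Θ : Matrix (Fin n) (Fin n) ℝ) (hΘsymm : Θ.IsSymm) (hΘ : ∀ i j, 0 ≤ Θ i j)
    (Ω : Matrix (Fin k) (Fin k) ℝ) (hΩsymm : Ω.IsSymm) (hΩ : ∀ i j, 0 ≤ Ω i j)
    (S : Matrix (Fin n) (Fin k) ℝ) (hS : ∀ i j, 0 ≤ S i j)
    (S' : Matrix (Fin n) (Fin k) ℝ) (hS' : ∀ i j, 0 < S' i j) :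
    Matrix.trace (Sᵀ * Θ * S * Ω)
      ≤ ∑ i, ∑ s, (Θ * S' * Ω) i s * (S i s) ^ 2 / S' i s :=
  ding_li_jordan_inequality_general n k Θ hΘsymm hΘ Ω hΩsymm hΩ S S' hS'
end

section
/- Let A be a symmetric k×k real matrix with nonnegative entries, and let V and V' be n×k real matrices with strictly positive entries. Then Tr(V A Vᵀ) ≥ Σ_{i=1}^n Σ_{k=1}^k Σ_{l=1}^k A_{kl} · v'_{ik} · v'_{il} · (1 + log( (v_{ik} v_{il}) / (v'_{ik} v'_{il}) )). -/
open Matrix BigOperators Real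

theorem Real.mul_one_add_log_div_le {x y : ℝ} (hx : 0 < x) (hy : 0 < y) :
    y * (1 + log (x / y)) ≤ x :=
  calc y * (1 + log (x / y))
      ≤ y * (x / y) := by
        gcongr
        linarith [log_le_sub_one_of_pos (div_pos hx hy)]
    _ = x := mul_div_cancel₀ x hy.ne'

theorem Matrix.trace_mul_mul_transpose {m n R : Type*} [Fintype m] [Fintype n]
    [NonUnitalSemiring R] (V : Matrix m n R) (A : Matrix n n R) :
    trace (V * A * Vᵀ) = ∑ i, ∑ s, ∑ l, V i s * A s l * V i l := by
  simp only [trace, diag, mul_apply, transpose_apply, Finset.sum_mul]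
  exact Finset.sum_congr rfl fun i _ => Finset.sum_comm

theorem quadratic_form_log_lower_bound_general (n k : ℕ)
    (A : Matrix (Fin k) (Fin k) ℝ) (hA : ∀ i j, 0 ≤ A i j)
    (V : Matrix (Fin n) (Fin k) ℝ) (hV : ∀ i j, 0 < V i j)
    (V' : Matrix (Fin n) (Fin k) ℝ) (hV' : ∀ i j, 0 < V' i j) :
    ∑ i, ∑ s, ∑ l, A s l * V' i s * V' i l *
        (1 + Real.log (V i s * V i l / (V' i s * V' i l)))
      ≤ Matrix.trace (V * A * Vᵀ) := by
  rw [trace_mul_mul_transpose]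
  refine Finset.sum_le_sum fun i _ => Finset.sum_le_sum fun s _ => Finset.sum_le_sum fun l _ => ?_
  calc A s l * V' i s * V' i l * (1 + log (V i s * V i l / (V' i s * V' i l)))
      = A s l * (V' i s * V' i l * (1 + log (V i s * V i l / (V' i s * V' i l)))) := by ring
    _ ≤ A s l * (V i s * V i l) :=
        mul_le_mul_of_nonneg_left
          (mul_one_add_log_div_le (mul_pos (hV i s) (hV i l)) (mul_pos (hV' i s) (hV' i l)))
          (hA s l)
    _ = V i s * A s l * V i l := by ring

/-- Logarithmic lower bound for the quadratic form: for symmetric A ≥ 0 and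
V, V' > 0 entrywise, Tr(V A Vᵀ) ≥ Σᵢₖₗ Aₖₗ v'ᵢₖ v'ᵢₗ (1 + log(vᵢₖvᵢₗ/(v'ᵢₖv'ᵢₗ))). -/
theorem quadratic_form_log_lower_bound (n k : ℕ)
    (A : Matrix (Fin k) (Fin k) ℝ) (hAsymm : A.IsSymm) (hA : ∀ i j, 0 ≤ A i j)
    (V : Matrix (Fin n) (Fin k) ℝ) (hV : ∀ i j, 0 < V i j)
    (V' : Matrix (Fin n) (Fin k) ℝ) (hV' : ∀ i j, 0 < V' i j) :
    ∑ i, ∑ s, ∑ l, A s l * V' i s * V' i l *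
        (1 + Real.log (V i s * V i l / (V' i s * V' i l)))
      ≤ Matrix.trace (V * A * Vᵀ) :=
  quadratic_form_log_lower_bound_general n k A hA V hV V' hV'
end

section
/- With F and J as defined in the context, for all n×k matrices V and V' with strictly positive entries, J(V, V') ≥ F(V); that is, J is an upper bound for F in its first argument. -/
open Matrix BigOperators Real

noncomputable section

/-- Positive part of a matrix: M⁺ᵢⱼ = (|Mᵢⱼ| + Mᵢⱼ)/2. -/
def mpos {α β : Type*} (M : Matrix α β ℝ) : Matrix α β ℝ :=
  Matrix.of fun i j => (|M i j| + M i j) / 2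

/-- Negative part of a matrix: M⁻ᵢⱼ = (|Mᵢⱼ| − Mᵢⱼ)/2. -/
def mneg {α β : Type*} (M : Matrix α β ℝ) : Matrix α β ℝ :=
  Matrix.of fun i j => (|M i j| - M i j) / 2

/-- Degree matrix of a weight matrix: diagonal with Dᵢᵢ = Σⱼ Wᵢⱼ. -/
def dmat {n : ℕ} (W : Matrix (Fin n) (Fin n) ℝ) : Matrix (Fin n) (Fin n) ℝ :=
  Matrix.diagonal (fun i => ∑ j, W i j)

/-- The objective F(V) of the V-subproblem (eq. (17) in the paper). -/
def Fobj {n k : ℕ} (B₁ B₂ : Matrix (Fin n) (Fin k) ℝ)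
    (A₁ A₂ : Matrix (Fin k) (Fin k) ℝ)
    (WP WQ : Matrix (Fin n) (Fin n) ℝ) (lam : ℝ)
    (V : Matrix (Fin n) (Fin k) ℝ) : ℝ :=
  -2 * Matrix.trace (Vᵀ * mpos B₁) + 2 * Matrix.trace (Vᵀ * mneg B₁)
    + Matrix.trace (V * mpos A₁ * Vᵀ) - Matrix.trace (V * mneg A₁ * Vᵀ)
    - 2 * Matrix.trace (Vᵀ * mpos B₂) + 2 * Matrix.trace (Vᵀ * mneg B₂)
    + Matrix.trace (V * mpos A₂ * Vᵀ) - Matrix.trace (V * mneg A₂ * Vᵀ)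
    + lam * Matrix.trace (Vᵀ * dmat WP * V) - lam * Matrix.trace (Vᵀ * WP * V)
    + lam * Matrix.trace (Vᵀ * dmat WQ * V) - lam * Matrix.trace (Vᵀ * WQ * V)

/-- The auxiliary function J(V, V') of Lemma 3 in the paper. -/
def Jaux {n k : ℕ} (B₁ B₂ : Matrix (Fin n) (Fin k) ℝ)
    (A₁ A₂ : Matrix (Fin k) (Fin k) ℝ)
    (WP WQ : Matrix (Fin n) (Fin n) ℝ) (lam : ℝ)
    (V V' : Matrix (Fin n) (Fin k) ℝ) : ℝ :=
  -2 * ∑ i, ∑ s, mpos B₁ i s * V' i s * (1 + Real.log (V i s / V' i s))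
    + 2 * ∑ i, ∑ s, mneg B₁ i s * ((V i s) ^ 2 + (V' i s) ^ 2) / (2 * V' i s)
    + ∑ i, ∑ s, (V' * mpos A₁) i s * (V i s) ^ 2 / V' i s
    - ∑ i, ∑ s, ∑ l, mneg A₁ s l * V' i s * V' i l *
        (1 + Real.log (V i s * V i l / (V' i s * V' i l)))
    - 2 * ∑ i, ∑ s, mpos B₂ i s * V' i s * (1 + Real.log (V i s / V' i s))
    + 2 * ∑ i, ∑ s, mneg B₂ i s * ((V i s) ^ 2 + (V' i s) ^ 2) / (2 * V' i s)
    + ∑ i, ∑ s, (V' * mpos A₂) i s * (V i s) ^ 2 / V' i s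
    - ∑ i, ∑ s, ∑ l, mneg A₂ s l * V' i s * V' i l *
        (1 + Real.log (V i s * V i l / (V' i s * V' i l)))
    + lam * ∑ i, ∑ s, (dmat WP * V') i s * (V i s) ^ 2 / V' i s
    - lam * ∑ a, ∑ c, ∑ j, WP a c * V' a j * V' c j *
        (1 + Real.log (V a j * V c j / (V' a j * V' c j)))
    + lam * ∑ i, ∑ s, (dmat WQ * V') i s * (V i s) ^ 2 / V' i s
    - lam * ∑ a, ∑ c, ∑ j, WQ a c * V' a j * V' c j *
        (1 + Real.log (V a j * V c j / (V' a j * V' c j)))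

/-!
`J(·, V')` majorizes `F` term by term. The terms entering `F` with a minus sign (those of
`B⁺`, `A⁻`, `W`) are bounded through `1 + log t ≤ t`, at `t = v / v'` or
`t = v v₀ / (v' v₀')`; the `B⁻` terms through `v ≤ (v² + v'²) / (2v')`; the quadratic form
of the symmetric nonnegative matrix `A⁺` through `2ab ≤ q a² / p + p b² / q`. The degree
terms coincide on both sides.
-/

lemma mul_mul_one_add_log_div_le {b v v' : ℝ} (hb : 0 ≤ b) (hv : 0 < v) (hv' : 0 < v') :
    b * v' * (1 + log (v / v')) ≤ b * v := by
  have hlog := log_le_sub_one_of_pos (div_pos hv hv')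
  calc b * v' * (1 + log (v / v')) ≤ b * v' * (v / v') := by gcongr; linarith
    _ = b * v := by field_simp

lemma le_sq_add_sq_div_two_mul (v : ℝ) {v' : ℝ} (hv' : 0 < v') :
    v ≤ (v ^ 2 + v' ^ 2) / (2 * v') := by
  rw [le_div_iff₀ (by positivity)]
  nlinarith [sq_nonneg (v - v')]

lemma two_mul_mul_le_div_add_div (a b : ℝ) {p q : ℝ} (hp : 0 < p) (hq : 0 < q) :
    2 * (a * b) ≤ q * a ^ 2 / p + p * b ^ 2 / q := by
  rw [div_add_div _ _ hp.ne' hq.ne', le_div_iff₀ (by positivity)]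
  nlinarith [sq_nonneg (q * a - p * b)]

lemma mpos_nonneg {α β : Type*} (M : Matrix α β ℝ) (i : α) (j : β) : 0 ≤ mpos M i j := by
  simp only [mpos, of_apply]
  linarith [neg_abs_le (M i j)]

lemma mneg_nonneg {α β : Type*} (M : Matrix α β ℝ) (i : α) (j : β) : 0 ≤ mneg M i j := by
  simp only [mneg, of_apply]
  linarith [le_abs_self (M i j)]

lemma Matrix.IsSymm.mpos {α : Type*} {A : Matrix α α ℝ} (hA : A.IsSymm) : (mpos A).IsSymm := by
  ext i j
  simp only [transpose_apply, _root_.mpos, of_apply, hA.apply]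

section Trace

variable {ι κ : Type*} [Fintype ι] [Fintype κ]

lemma trace_transpose_mul_eq_sum (V M : Matrix ι κ ℝ) :
    trace (Vᵀ * M) = ∑ i, ∑ s, M i s * V i s := by
  simp only [trace, diag_apply, mul_apply, transpose_apply]
  rw [Finset.sum_comm]
  simp only [mul_comm]

lemma trace_mul_mul_transpose_eq_sum (A : Matrix κ κ ℝ) (V : Matrix ι κ ℝ) :
    trace (V * A * Vᵀ) = ∑ i, ∑ s, ∑ l, A s l * V i s * V i l := by
  simp only [trace, diag_apply, mul_apply, transpose_apply, Finset.sum_mul]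
  refine Finset.sum_congr rfl fun i _ => ?_
  rw [Finset.sum_comm]
  simp only [mul_comm (V i _)]

lemma trace_transpose_mul_mul_eq_sum (W : Matrix ι ι ℝ) (V : Matrix ι κ ℝ) :
    trace (Vᵀ * W * V) = ∑ a, ∑ c, ∑ j, W a c * V a j * V c j := by
  rw [Matrix.mul_assoc, trace_transpose_mul_eq_sum]
  simp only [mul_apply, Finset.sum_mul]
  refine Finset.sum_congr rfl fun a _ => ?_
  rw [Finset.sum_comm]
  exact Finset.sum_congr rfl fun c _ => Finset.sum_congr rfl fun j _ => by ring

lemma trace_transpose_mul_diagonal_mul_eq_sum_div [DecidableEq ι] (d : ι → ℝ)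
    (V : Matrix ι κ ℝ) {V' : Matrix ι κ ℝ} (hV' : ∀ i s, V' i s ≠ 0) :
    trace (Vᵀ * diagonal d * V) = ∑ i, ∑ s, (diagonal d * V') i s * V i s ^ 2 / V' i s := by
  rw [Matrix.mul_assoc, trace_transpose_mul_eq_sum]
  refine Finset.sum_congr rfl fun i _ => Finset.sum_congr rfl fun s _ => ?_
  have := hV' i s
  simp only [diagonal_mul]
  field_simp

end Trace

section Majorization

variable {ι κ : Type*} [Fintype ι] [Fintype κ] {V V' : Matrix ι κ ℝ}

lemma sum_mul_one_add_log_div_le_trace {M : Matrix ι κ ℝ} (hM : ∀ i s, 0 ≤ M i s)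
    (hV : ∀ i s, 0 < V i s) (hV' : ∀ i s, 0 < V' i s) :
    ∑ i, ∑ s, M i s * V' i s * (1 + log (V i s / V' i s)) ≤ trace (Vᵀ * M) := by
  rw [trace_transpose_mul_eq_sum]
  refine Finset.sum_le_sum fun i _ => Finset.sum_le_sum fun s _ => ?_
  exact mul_mul_one_add_log_div_le (hM i s) (hV i s) (hV' i s)

lemma trace_le_sum_mul_sq_add_sq_div {M : Matrix ι κ ℝ} (hM : ∀ i s, 0 ≤ M i s)
    (hV' : ∀ i s, 0 < V' i s) :
    trace (Vᵀ * M) ≤ ∑ i, ∑ s, M i s * (V i s ^ 2 + V' i s ^ 2) / (2 * V' i s) := by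
  rw [trace_transpose_mul_eq_sum]
  refine Finset.sum_le_sum fun i _ => Finset.sum_le_sum fun s _ => ?_
  rw [mul_div_assoc]
  exact mul_le_mul_of_nonneg_left (le_sq_add_sq_div_two_mul _ (hV' i s)) (hM i s)

lemma sum_mul_mul_one_add_log_le_trace_mul_mul_transpose {A : Matrix κ κ ℝ}
    (hA : ∀ s l, 0 ≤ A s l) (hV : ∀ i s, 0 < V i s) (hV' : ∀ i s, 0 < V' i s) :
    ∑ i, ∑ s, ∑ l, A s l * V' i s * V' i l * (1 + log (V i s * V i l / (V' i s * V' i l)))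
      ≤ trace (V * A * Vᵀ) := by
  rw [trace_mul_mul_transpose_eq_sum]
  refine Finset.sum_le_sum fun i _ => Finset.sum_le_sum fun s _ =>
    Finset.sum_le_sum fun l _ => ?_
  simpa only [mul_assoc] using mul_mul_one_add_log_div_le (hA s l)
    (mul_pos (hV i s) (hV i l)) (mul_pos (hV' i s) (hV' i l))

lemma sum_mul_mul_one_add_log_le_trace_transpose_mul_mul {W : Matrix ι ι ℝ}
    (hW : ∀ a c, 0 ≤ W a c) (hV : ∀ i s, 0 < V i s) (hV' : ∀ i s, 0 < V' i s) :
    ∑ a, ∑ c, ∑ j, W a c * V' a j * V' c j * (1 + log (V a j * V c j / (V' a j * V' c j)))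
      ≤ trace (Vᵀ * W * V) := by
  rw [trace_transpose_mul_mul_eq_sum]
  refine Finset.sum_le_sum fun a _ => Finset.sum_le_sum fun c _ =>
    Finset.sum_le_sum fun j _ => ?_
  simpa only [mul_assoc] using mul_mul_one_add_log_div_le (hW a c)
    (mul_pos (hV a j) (hV c j)) (mul_pos (hV' a j) (hV' c j))

lemma sum_mul_mul_le_sum_vecMul_mul_sq_div {A : Matrix κ κ ℝ} (hA : A.IsSymm)
    (hA₀ : ∀ s l, 0 ≤ A s l) (x : κ → ℝ) {y : κ → ℝ} (hy : ∀ s, 0 < y s) :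
    ∑ s, ∑ l, A s l * x s * x l ≤ ∑ s, (y ᵥ* A) s * x s ^ 2 / y s := by
  set T : κ → κ → ℝ := fun s l => y l * A l s * x s ^ 2 / y s
  have hT : ∑ s, (y ᵥ* A) s * x s ^ 2 / y s = ∑ s, ∑ l, T s l := by
    simp only [T, vecMul, dotProduct, Finset.sum_mul, Finset.sum_div]
  have hpair : ∀ s l, 2 * (A s l * x s * x l) ≤ T s l + T l s := fun s l => by
    have := mul_le_mul_of_nonneg_left (two_mul_mul_le_div_add_div (x s) (x l) (hy s) (hy l))
      (hA₀ s l)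
    simp only [T, hA.apply s l]
    calc 2 * (A s l * x s * x l) = A s l * (2 * (x s * x l)) := by ring
      _ ≤ A s l * (y l * x s ^ 2 / y s + y s * x l ^ 2 / y l) := this
      _ = _ := by ring
  have hsum : 2 * ∑ s, ∑ l, A s l * x s * x l ≤ 2 * ∑ s, ∑ l, T s l :=
    calc 2 * ∑ s, ∑ l, A s l * x s * x l = ∑ s, ∑ l, 2 * (A s l * x s * x l) := by
          simp only [Finset.mul_sum]
      _ ≤ ∑ s, ∑ l, (T s l + T l s) := by gcongr with s _ l _; exact hpair s l
      _ = ∑ s, ∑ l, T s l + ∑ s, ∑ l, T l s := by simp only [Finset.sum_add_distrib]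
      _ = 2 * ∑ s, ∑ l, T s l := by rw [Finset.sum_comm (f := fun s l => T l s)]; ring
  rw [hT]
  linarith

lemma trace_mul_mul_transpose_le_sum_mul_sq_div {A : Matrix κ κ ℝ} (hA : A.IsSymm)
    (hA₀ : ∀ s l, 0 ≤ A s l) (hV' : ∀ i s, 0 < V' i s) :
    trace (V * A * Vᵀ) ≤ ∑ i, ∑ s, (V' * A) i s * V i s ^ 2 / V' i s := by
  rw [trace_mul_mul_transpose_eq_sum]
  exact Finset.sum_le_sum fun i _ => sum_mul_mul_le_sum_vecMul_mul_sq_div hA hA₀ (V i) (hV' i)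

end Majorization

theorem Jaux_ge_Fobj_general (n k : ℕ) (B₁ B₂ : Matrix (Fin n) (Fin k) ℝ)
    (A₁ A₂ : Matrix (Fin k) (Fin k) ℝ) (hA₁ : A₁.IsSymm) (hA₂ : A₂.IsSymm)
    (WP WQ : Matrix (Fin n) (Fin n) ℝ)
    (hWPnn : ∀ i j, 0 ≤ WP i j) (hWQnn : ∀ i j, 0 ≤ WQ i j)
    (lam : ℝ) (hlam : 0 ≤ lam)
    (V V' : Matrix (Fin n) (Fin k) ℝ)
    (hV : ∀ i j, 0 < V i j) (hV' : ∀ i j, 0 < V' i j) :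
    Fobj B₁ B₂ A₁ A₂ WP WQ lam V ≤ Jaux B₁ B₂ A₁ A₂ WP WQ lam V V' := by
  have hV'_ne : ∀ i j, V' i j ≠ 0 := fun i j => (hV' i j).ne'
  have hP := mul_le_mul_of_nonneg_left
    (sum_mul_mul_one_add_log_le_trace_transpose_mul_mul hWPnn hV hV') hlam
  have hQ := mul_le_mul_of_nonneg_left
    (sum_mul_mul_one_add_log_le_trace_transpose_mul_mul hWQnn hV hV') hlam
  rw [Fobj, Jaux, dmat, dmat, trace_transpose_mul_diagonal_mul_eq_sum_div _ V hV'_ne,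
    trace_transpose_mul_diagonal_mul_eq_sum_div _ V hV'_ne]
  linarith [sum_mul_one_add_log_div_le_trace (mpos_nonneg B₁) hV hV',
    sum_mul_one_add_log_div_le_trace (mpos_nonneg B₂) hV hV',
    trace_le_sum_mul_sq_add_sq_div (V := V) (mneg_nonneg B₁) hV',
    trace_le_sum_mul_sq_add_sq_div (V := V) (mneg_nonneg B₂) hV',
    trace_mul_mul_transpose_le_sum_mul_sq_div (V := V) hA₁.mpos (mpos_nonneg A₁) hV',
    trace_mul_mul_transpose_le_sum_mul_sq_div (V := V) hA₂.mpos (mpos_nonneg A₂) hV',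
    sum_mul_mul_one_add_log_le_trace_mul_mul_transpose (mneg_nonneg A₁) hV hV',
    sum_mul_mul_one_add_log_le_trace_mul_mul_transpose (mneg_nonneg A₂) hV hV']

/-- Lemma (auxiliary function, upper-bound part): J(V, V') ≥ F(V) for all
matrices V, V' with strictly positive entries. -/
theorem Jaux_ge_Fobj (n k : ℕ) (B₁ B₂ : Matrix (Fin n) (Fin k) ℝ)
    (A₁ A₂ : Matrix (Fin k) (Fin k) ℝ) (hA₁ : A₁.IsSymm) (hA₂ : A₂.IsSymm)
    (WP WQ : Matrix (Fin n) (Fin n) ℝ) (hWP : WP.IsSymm) (hWQ : WQ.IsSymm)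
    (hWPnn : ∀ i j, 0 ≤ WP i j) (hWQnn : ∀ i j, 0 ≤ WQ i j)
    (lam : ℝ) (hlam : 0 ≤ lam)
    (V V' : Matrix (Fin n) (Fin k) ℝ)
    (hV : ∀ i j, 0 < V i j) (hV' : ∀ i j, 0 < V' i j) :
    Fobj B₁ B₂ A₁ A₂ WP WQ lam V ≤ Jaux B₁ B₂ A₁ A₂ WP WQ lam V V' :=
  Jaux_ge_Fobj_general n k B₁ B₂ A₁ A₂ hA₁ hA₂ WP WQ hWPnn hWQnn lam hlam V V' hV hV'

end
end

section
/- With J as defined in the context, fix an n×k matrix V' with strictly positive entries and assume that for every index pair (i,k) the quantities (Δ₁)_{ik} = (B₁⁺ + B₂⁺ + V'(A₁⁻ + A₂⁻) + λ₂(W_P + W_Q)V')_{ik} and (Δ₂)_{ik} = (B₁⁻ + B₂⁻ + V'(A₁⁺ + A₂⁺) + λ₂(D_P + D_Q)V')_{ik} are strictly positive. Then the function V ↦ J(V, V') is convex on the set of n×k matrices with strictly positive entries: its Hessian is the diagonal matrix with entries ∂²J/∂v_{ik}² = 2(Δ₁)_{ik} v'_{ik} / v_{ik}² + 2(Δ₂)_{ik}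 / v'_{ik}, which are strictly positive, so the Hessian is positive definite at every such V. -/
open Matrix BigOperators Real

noncomputable section

/-!
On entrywise positive matrices every logarithm in `J(V, V')` splits as `log v − log v'`, and
the symmetry of `A₁, A₂, W_P, W_Q` lets each double-index logarithm be collected onto one entry.
What remains is, up to a constant depending only on `V'`, the separable function
`∑ (Δ₂)ᵢₖ / v'ᵢₖ · vᵢₖ² − 2 (Δ₁)ᵢₖ v'ᵢₖ · log vᵢₖ`. Each summand `q t² − b log t` with
`q, b ≥ 0` is convex on `t > 0` with second derivative `2q + b/t²`.
-/

section ConvexOnSum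

variable {𝕜 E β ι : Type*} [Semiring 𝕜] [PartialOrder 𝕜] [AddCommMonoid E] [SMul 𝕜 E]
  [AddCommMonoid β] [PartialOrder β] [IsOrderedAddMonoid β] [Module 𝕜 β] {s : Set E}

theorem convexOn_finset_sum {f : ι → E → β} (t : Finset ι) (hs : Convex 𝕜 s)
    (hf : ∀ i ∈ t, ConvexOn 𝕜 s (f i)) : ConvexOn 𝕜 s fun x => ∑ i ∈ t, f i x := by
  classical
  induction t using Finset.induction_on with
  | empty => simpa using convexOn_const 0 hs
  | insert a t ha ih =>
    simp_rw [Finset.sum_insert ha]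
    exact (hf a (Finset.mem_insert_self a t)).add
      (ih fun i hi => hf i (Finset.mem_insert_of_mem hi))

end ConvexOnSum

section QuadLog

def quadLog (q b t : ℝ) : ℝ := q * t ^ 2 - b * Real.log t

theorem convexOn_quadLog {q b : ℝ} (hq : 0 ≤ q) (hb : 0 ≤ b) :
    ConvexOn ℝ (Set.Ioi 0) (quadLog q b) :=
  (((even_two.convexOn_pow).subset (Set.subset_univ _) (convex_Ioi 0)).smul hq).sub
    (strictConcaveOn_log_Ioi.concaveOn.smul hb)

theorem hasDerivAt_quadLog (q b : ℝ) {t : ℝ} (ht : t ≠ 0) :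
    HasDerivAt (quadLog q b) (2 * q * t - b * t⁻¹) t :=
  (((hasDerivAt_pow 2 t).const_mul q).sub ((Real.hasDerivAt_log ht).const_mul b)).congr_deriv
    (by ring)

theorem iteratedDeriv_two_quadLog (q b : ℝ) {t : ℝ} (ht : t ≠ 0) :
    iteratedDeriv 2 (quadLog q b) t = 2 * q + b / t ^ 2 := by
  have hderiv : deriv (quadLog q b) =ᶠ[nhds t] fun u => 2 * q * u - b * u⁻¹ := by
    filter_upwards [isOpen_ne.mem_nhds ht] with u hu
    exact (hasDerivAt_quadLog q b hu).deriv
  have h : HasDerivAt (fun u => 2 * q * u - b * u⁻¹) (2 * q * 1 - b * -(t ^ 2)⁻¹) t :=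
    ((hasDerivAt_id t).const_mul (2 * q)).sub ((hasDerivAt_inv ht).const_mul b)
  rw [iteratedDeriv_succ, iteratedDeriv_one, hderiv.deriv_eq, h.deriv]
  field_simp
  ring

end QuadLog

section MatrixEntries

variable {m k : Type*}

open Finset

theorem convex_setOf_forall_pos : Convex ℝ {V : Matrix m k ℝ | ∀ i j, 0 < V i j} :=
  fun _ hx _ hy _ _ ha hb hab i j => (convex_Ioi (0 : ℝ)) (hx i j) (hy i j) ha hb hab

variable [Fintype m] [Fintype k]

theorem convexOn_sum_sum_entry {φ : m → k → ℝ → ℝ}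
    (hφ : ∀ i j, ConvexOn ℝ (Set.Ioi 0) (φ i j)) :
    ConvexOn ℝ {V : Matrix m k ℝ | ∀ i j, 0 < V i j} fun V => ∑ i, ∑ j, φ i j (V i j) :=
  convexOn_finset_sum _ convex_setOf_forall_pos fun i _ =>
    convexOn_finset_sum _ convex_setOf_forall_pos fun j _ =>
      ((hφ i j).comp_linearMap (Matrix.entryLinearMap ℝ ℝ i j)).subset
        (fun _ hV => hV i j) convex_setOf_forall_pos

theorem sum_sum_entry_update [DecidableEq m] [DecidableEq k] {G : Type*} [AddCommGroup G]
    (φ : m → k → ℝ → G) (V : Matrix m k ℝ) (i : m) (j : k) (t : ℝ) :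
    ∑ a, ∑ b, φ a b (Matrix.of (fun a b => if a = i ∧ b = j then t else V a b) a b)
      = ∑ a, ∑ b, φ a b (V a b) + (φ i j t - φ i j (V i j)) := by
  have h : ∀ a b, φ a b (Matrix.of (fun a b => if a = i ∧ b = j then t else V a b) a b)
      = φ a b (V a b) + if (a, b) = (i, j) then φ i j t - φ i j (V i j) else 0 := by
    intro a b
    by_cases hab : a = i ∧ b = j
    · obtain ⟨rfl, rfl⟩ := hab
      simp
    · simp [hab, Prod.ext_iff]
  simp only [h, sum_add_distrib, ← Fintype.sum_prod_type', sum_ite_eq', mem_univ, if_true]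

theorem iteratedDeriv_two_entry_update [DecidableEq m] [DecidableEq k] {F : Matrix m k ℝ → ℝ}
    (φ : m → k → ℝ → ℝ) {C : ℝ}
    (hF : ∀ V : Matrix m k ℝ, (∀ i j, V i j ≠ 0) → F V = ∑ a, ∑ b, φ a b (V a b) + C)
    {V : Matrix m k ℝ} (hV : ∀ i j, V i j ≠ 0) (i : m) (j : k) :
    iteratedDeriv 2 (fun t => F (Matrix.of fun a b => if a = i ∧ b = j then t else V a b))
        (V i j) = iteratedDeriv 2 (φ i j) (V i j) := by
  have hlocal : (fun t => F (Matrix.of fun a b => if a = i ∧ b = j then t else V a b))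
      =ᶠ[nhds (V i j)] fun t => (∑ a, ∑ b, φ a b (V a b) - φ i j (V i j) + C) + φ i j t := by
    filter_upwards [isOpen_ne.mem_nhds (hV i j)] with t ht
    have hne : ∀ a b, (Matrix.of fun a b => if a = i ∧ b = j then t else V a b) a b ≠ 0 := by
      intro a b
      simp only [Matrix.of_apply]
      split_ifs
      exacts [ht, hV a b]
    rw [hF _ hne, sum_sum_entry_update φ]
    ring
  rw [hlocal.iteratedDeriv_eq, iteratedDeriv_const_add two_pos]

end MatrixEntries

section LogSplitting

variable {m k : Type*} [Fintype m] [Fintype k] {V' : Matrix m k ℝ}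

open Finset Real

theorem exists_sum_mul_one_add_log_div (M : Matrix m k ℝ) (hV' : ∀ i s, V' i s ≠ 0) :
    ∃ c, ∀ V : Matrix m k ℝ, (∀ i s, V i s ≠ 0) →
      ∑ i, ∑ s, M i s * V' i s * (1 + log (V i s / V' i s))
        = ∑ i, ∑ s, M i s * V' i s * log (V i s) + c := by
  refine ⟨∑ i, ∑ s, M i s * V' i s * (1 - log (V' i s)), fun V hV => ?_⟩
  simp only [← sum_add_distrib]
  refine sum_congr rfl fun i _ => sum_congr rfl fun s _ => ?_
  rw [log_div (hV i s) (hV' i s)]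
  ring

theorem exists_sum_mul_sq_add_sq_div (M : Matrix m k ℝ) :
    ∃ c, ∀ V : Matrix m k ℝ,
      ∑ i, ∑ s, M i s * (V i s ^ 2 + V' i s ^ 2) / (2 * V' i s)
        = ∑ i, ∑ s, M i s / V' i s * V i s ^ 2 / 2 + c := by
  refine ⟨∑ i, ∑ s, M i s * V' i s ^ 2 / (2 * V' i s), fun V => ?_⟩
  simp only [← sum_add_distrib]
  refine sum_congr rfl fun i _ => sum_congr rfl fun s _ => ?_
  ring

theorem exists_sum_rowPair_log {A : Matrix k k ℝ} (hA : A.IsSymm) (hV' : ∀ i s, V' i s ≠ 0) :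
    ∃ c, ∀ V : Matrix m k ℝ, (∀ i s, V i s ≠ 0) →
      ∑ i, ∑ s, ∑ l, A s l * V' i s * V' i l * (1 + log (V i s * V i l / (V' i s * V' i l)))
        = 2 * ∑ i, ∑ s, (V' * A) i s * V' i s * log (V i s) + c := by
  refine ⟨∑ i, ∑ s, ∑ l, A s l * V' i s * V' i l * (1 - log (V' i s) - log (V' i l)),
    fun V hV => ?_⟩
  have hsplit : ∀ i s l, A s l * V' i s * V' i l * (1 + log (V i s * V i l / (V' i s * V' i l)))
      = A s l * V' i s * V' i l * log (V i s) + A s l * V' i s * V' i l * log (V i l)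
        + A s l * V' i s * V' i l * (1 - log (V' i s) - log (V' i l)) := by
    intro i s l
    rw [log_div (mul_ne_zero (hV i s) (hV i l)) (mul_ne_zero (hV' i s) (hV' i l)),
      log_mul (hV i s) (hV i l), log_mul (hV' i s) (hV' i l)]
    ring
  have hswap : ∀ i, ∑ s, ∑ l, A s l * V' i s * V' i l * log (V i l)
      = ∑ s, ∑ l, A s l * V' i s * V' i l * log (V i s) := by
    intro i
    rw [sum_comm]
    refine sum_congr rfl fun s _ => sum_congr rfl fun l _ => ?_
    rw [hA.apply]
    ring
  have hrow : ∀ i s, ∑ l, A s l * V' i s * V' i l * log (V i s)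
      = (V' * A) i s * V' i s * log (V i s) := by
    intro i s
    rw [Matrix.mul_apply, sum_mul, sum_mul]
    refine sum_congr rfl fun l _ => ?_
    rw [hA.apply]
    ring
  simp only [hsplit, sum_add_distrib, hswap, hrow]
  ring

theorem exists_sum_colPair_log {W : Matrix m m ℝ} (hW : W.IsSymm) (hV' : ∀ a j, V' a j ≠ 0) :
    ∃ c, ∀ V : Matrix m k ℝ, (∀ a j, V a j ≠ 0) →
      ∑ a, ∑ b, ∑ j, W a b * V' a j * V' b j * (1 + log (V a j * V b j / (V' a j * V' b j)))
        = 2 * ∑ a, ∑ j, (W * V') a j * V' a j * log (V a j) + c := by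
  obtain ⟨c, hc⟩ := exists_sum_rowPair_log (V' := V'ᵀ) hW fun j a => hV' a j
  refine ⟨c, fun V hV => ?_⟩
  have hWV' : V'ᵀ * W = (W * V')ᵀ := by rw [Matrix.transpose_mul, hW.eq]
  have h := hc Vᵀ fun j a => hV a j
  simp only [hWV', Matrix.transpose_apply] at h
  calc _ = ∑ j, ∑ a, ∑ b,
          W a b * V' a j * V' b j * (1 + log (V a j * V b j / (V' a j * V' b j))) :=
        (sum_congr rfl fun a _ => sum_comm).trans sum_comm
    _ = _ := by rw [h, sum_comm]

end LogSplitting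

theorem Matrix.IsSymm.mneg {α : Type*} {A : Matrix α α ℝ} (hA : A.IsSymm) : (mneg A).IsSymm :=
  Matrix.IsSymm.ext fun i j => by
    change (|A j i| - A j i) / 2 = (|A i j| - A i j) / 2
    rw [hA.apply]

section Decomposition

open Finset Real

variable {n k : ℕ} {B₁ B₂ : Matrix (Fin n) (Fin k) ℝ} {A₁ A₂ : Matrix (Fin k) (Fin k) ℝ}
  {WP WQ : Matrix (Fin n) (Fin n) ℝ} {lam : ℝ} {V' Δ₁ Δ₂ : Matrix (Fin n) (Fin k) ℝ}

theorem exists_Jaux_eq_sum_quadLog_add_const (hA₁ : A₁.IsSymm) (hA₂ : A₂.IsSymm)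
    (hWP : WP.IsSymm) (hWQ : WQ.IsSymm) (hV' : ∀ i j, V' i j ≠ 0)
    (hΔ₁def : Δ₁ = mpos B₁ + mpos B₂ + V' * (mneg A₁ + mneg A₂) + lam • ((WP + WQ) * V'))
    (hΔ₂def : Δ₂ = mneg B₁ + mneg B₂ + V' * (mpos A₁ + mpos A₂)
        + lam • ((dmat WP + dmat WQ) * V')) :
    ∃ C, ∀ V : Matrix (Fin n) (Fin k) ℝ, (∀ i j, V i j ≠ 0) →
      Jaux B₁ B₂ A₁ A₂ WP WQ lam V V'
        = ∑ i, ∑ s, quadLog (Δ₂ i s / V' i s) (2 * Δ₁ i s * V' i s) (V i s) + C := by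
  obtain ⟨c₁, h₁⟩ := exists_sum_mul_one_add_log_div (mpos B₁) hV'
  obtain ⟨c₂, h₂⟩ := exists_sum_mul_one_add_log_div (mpos B₂) hV'
  obtain ⟨c₃, h₃⟩ := exists_sum_mul_sq_add_sq_div (V' := V') (mneg B₁)
  obtain ⟨c₄, h₄⟩ := exists_sum_mul_sq_add_sq_div (V' := V') (mneg B₂)
  obtain ⟨c₅, h₅⟩ := exists_sum_rowPair_log hA₁.mneg hV'
  obtain ⟨c₆, h₆⟩ := exists_sum_rowPair_log hA₂.mneg hV'
  obtain ⟨c₇, h₇⟩ := exists_sum_colPair_log (k := Fin k) hWP hV'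
  obtain ⟨c₈, h₈⟩ := exists_sum_colPair_log (k := Fin k) hWQ hV'
  refine ⟨-2 * c₁ + 2 * c₃ - c₅ - 2 * c₂ + 2 * c₄ - c₆ - lam * c₇ - lam * c₈, fun V hV => ?_⟩
  have hmodel : ∑ i, ∑ s, quadLog (Δ₂ i s / V' i s) (2 * Δ₁ i s * V' i s) (V i s)
      = 2 * ∑ i, ∑ s, mneg B₁ i s / V' i s * V i s ^ 2 / 2
        + 2 * ∑ i, ∑ s, mneg B₂ i s / V' i s * V i s ^ 2 / 2
        + ∑ i, ∑ s, (V' * mpos A₁) i s * V i s ^ 2 / V' i s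
        + ∑ i, ∑ s, (V' * mpos A₂) i s * V i s ^ 2 / V' i s
        + lam * ∑ i, ∑ s, (dmat WP * V') i s * V i s ^ 2 / V' i s
        + lam * ∑ i, ∑ s, (dmat WQ * V') i s * V i s ^ 2 / V' i s
        - 2 * ∑ i, ∑ s, mpos B₁ i s * V' i s * log (V i s)
        - 2 * ∑ i, ∑ s, mpos B₂ i s * V' i s * log (V i s)
        - 2 * ∑ i, ∑ s, (V' * mneg A₁) i s * V' i s * log (V i s)
        - 2 * ∑ i, ∑ s, (V' * mneg A₂) i s * V' i s * log (V i s)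
        - lam * (2 * ∑ i, ∑ s, (WP * V') i s * V' i s * log (V i s))
        - lam * (2 * ∑ i, ∑ s, (WQ * V') i s * V' i s * log (V i s)) := by
    simp only [quadLog, hΔ₁def, hΔ₂def, Matrix.mul_add, Matrix.add_mul, Matrix.add_apply,
      Matrix.smul_apply, smul_eq_mul, mul_sum, ← sum_add_distrib, ← sum_sub_distrib]
    exact sum_congr rfl fun i _ => sum_congr rfl fun s _ => by ring
  rw [Jaux, h₁ V hV, h₂ V hV, h₃ V, h₄ V, h₅ V hV, h₆ V hV, h₇ V hV, h₈ V hV, hmodel]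
  ring

end Decomposition

theorem Jaux_convex_general (n k : ℕ) (B₁ B₂ : Matrix (Fin n) (Fin k) ℝ)
    (A₁ A₂ : Matrix (Fin k) (Fin k) ℝ) (hA₁ : A₁.IsSymm) (hA₂ : A₂.IsSymm)
    (WP WQ : Matrix (Fin n) (Fin n) ℝ) (hWP : WP.IsSymm) (hWQ : WQ.IsSymm)
    (lam : ℝ)
    (V' : Matrix (Fin n) (Fin k) ℝ) (hV' : ∀ i j, 0 < V' i j)
    (Δ₁ Δ₂ : Matrix (Fin n) (Fin k) ℝ)
    (hΔ₁def : Δ₁ = mpos B₁ + mpos B₂ + V' * (mneg A₁ + mneg A₂)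
        + lam • ((WP + WQ) * V'))
    (hΔ₂def : Δ₂ = mneg B₁ + mneg B₂ + V' * (mpos A₁ + mpos A₂)
        + lam • ((dmat WP + dmat WQ) * V'))
    (hΔ₁ : ∀ i j, 0 < Δ₁ i j) (hΔ₂ : ∀ i j, 0 < Δ₂ i j) :
    ConvexOn ℝ {V : Matrix (Fin n) (Fin k) ℝ | ∀ i j, 0 < V i j}
      (fun V => Jaux B₁ B₂ A₁ A₂ WP WQ lam V V') ∧
    (∀ V : Matrix (Fin n) (Fin k) ℝ, (∀ i j, 0 < V i j) → ∀ i j,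
      iteratedDeriv 2
          (fun t : ℝ => Jaux B₁ B₂ A₁ A₂ WP WQ lam
            (Matrix.of fun a b => if a = i ∧ b = j then t else V a b) V')
          (V i j)
        = 2 * Δ₁ i j * V' i j / (V i j) ^ 2 + 2 * Δ₂ i j / V' i j) ∧
    (∀ V : Matrix (Fin n) (Fin k) ℝ, (∀ i j, 0 < V i j) → ∀ i j,
      0 < 2 * Δ₁ i j * V' i j / (V i j) ^ 2 + 2 * Δ₂ i j / V' i j) := by
  obtain ⟨C, hJ⟩ := exists_Jaux_eq_sum_quadLog_add_const hA₁ hA₂ hWP hWQ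
    (fun i j => (hV' i j).ne') hΔ₁def hΔ₂def
  set φ := fun i s => quadLog (Δ₂ i s / V' i s) (2 * Δ₁ i s * V' i s)
  have hφ : ∀ i s, ConvexOn ℝ (Set.Ioi 0) (φ i s) := fun i s =>
    convexOn_quadLog (div_pos (hΔ₂ i s) (hV' i s)).le
      (mul_pos (mul_pos two_pos (hΔ₁ i s)) (hV' i s)).le
  refine ⟨((convexOn_sum_sum_entry hφ).add_const C).congr fun V hV =>
      (hJ V fun i j => (hV i j).ne').symm, fun V hV i j => ?_, fun V hV i j => ?_⟩
  · rw [iteratedDeriv_two_entry_update φ hJ (fun a b => (hV a b).ne'),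
      iteratedDeriv_two_quadLog _ _ (hV i j).ne']
    field_simp
    ring
  · have := hΔ₁ i j
    have := hΔ₂ i j
    have := hV' i j
    have := hV i j
    positivity

/-- Lemma (auxiliary function, convexity part): with Δ₁, Δ₂ entrywise positive,
V ↦ J(V, V') is convex on the set of entrywise positive matrices; its Hessian is
diagonal with entries ∂²J/∂v²ᵢⱼ = 2(Δ₁)ᵢⱼ v'ᵢⱼ / vᵢⱼ² + 2(Δ₂)ᵢⱼ / v'ᵢⱼ, which are
strictly positive. -/
theorem Jaux_convex (n k : ℕ) (B₁ B₂ : Matrix (Fin n) (Fin k) ℝ)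
    (A₁ A₂ : Matrix (Fin k) (Fin k) ℝ) (hA₁ : A₁.IsSymm) (hA₂ : A₂.IsSymm)
    (WP WQ : Matrix (Fin n) (Fin n) ℝ) (hWP : WP.IsSymm) (hWQ : WQ.IsSymm)
    (hWPnn : ∀ i j, 0 ≤ WP i j) (hWQnn : ∀ i j, 0 ≤ WQ i j)
    (lam : ℝ) (hlam : 0 ≤ lam)
    (V' : Matrix (Fin n) (Fin k) ℝ) (hV' : ∀ i j, 0 < V' i j)
    (Δ₁ Δ₂ : Matrix (Fin n) (Fin k) ℝ)
    (hΔ₁def : Δ₁ = mpos B₁ + mpos B₂ + V' * (mneg A₁ + mneg A₂)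
        + lam • ((WP + WQ) * V'))
    (hΔ₂def : Δ₂ = mneg B₁ + mneg B₂ + V' * (mpos A₁ + mpos A₂)
        + lam • ((dmat WP + dmat WQ) * V'))
    (hΔ₁ : ∀ i j, 0 < Δ₁ i j) (hΔ₂ : ∀ i j, 0 < Δ₂ i j) :
    ConvexOn ℝ {V : Matrix (Fin n) (Fin k) ℝ | ∀ i j, 0 < V i j}
      (fun V => Jaux B₁ B₂ A₁ A₂ WP WQ lam V V') ∧
    (∀ V : Matrix (Fin n) (Fin k) ℝ, (∀ i j, 0 < V i j) → ∀ i j,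
      iteratedDeriv 2
          (fun t : ℝ => Jaux B₁ B₂ A₁ A₂ WP WQ lam
            (Matrix.of fun a b => if a = i ∧ b = j then t else V a b) V')
          (V i j)
        = 2 * Δ₁ i j * V' i j / (V i j) ^ 2 + 2 * Δ₂ i j / V' i j) ∧
    (∀ V : Matrix (Fin n) (Fin k) ℝ, (∀ i j, 0 < V i j) → ∀ i j,
      0 < 2 * Δ₁ i j * V' i j / (V i j) ^ 2 + 2 * Δ₂ i j / V' i j) :=
  Jaux_convex_general n k B₁ B₂ A₁ A₂ hA₁ hA₂ WP WQ hWP hWQ lam V' hV' Δ₁ Δ₂ hΔ₁def hΔ₂def hΔ₁ hΔ₂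

end
end

section
/- (Theorem 1, KKT part.) With the matrices as defined in the context, let V be an n×k matrix with nonnegative entries that is a fixed point of the multiplicative update: for every (i,j), v_{ij} = v_{ij} · sqrt( (B₁⁺ + B₂⁺ + V(A₁⁻ + A₂⁻) + λ₂(W_P + W_Q)V)_{ij} / (B₁⁻ + B₂⁻ + V(A₁⁺ + A₂⁺) + λ₂(D_P + D_Q)V)_{ij} ), where each denominator entry is strictly positive. Then V satisfies the fixed-point (complementary slackness / KKT) equation ( −2B₁ − 2B₂ + 2V(A₁ + A₂) + 2λ₂(L_P + L_Q)V )_{ij} · v_{ij}² = 0 for all (i,j), where L_P = D_P − W_P and L_Q = D_Q − W_Q. -/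
/-!
Splitting `B = B⁺ - B⁻`, `A = A⁺ - A⁻` and `L = D - W` shows that the gradient
`-2B₁ - 2B₂ + 2V(A₁ + A₂) + 2λ₂(L_P + L_Q)V` is exactly twice the denominator minus the numerator
of the multiplicative update. Where `vᵢⱼ ≠ 0` the fixed-point equation forces the square root, hence
the quotient, to be `1`, so numerator and denominator agree there.
-/

open Matrix BigOperators Real

noncomputable section

theorem mpos_sub_mneg {α β : Type*} (M : Matrix α β ℝ) : mpos M - mneg M = M := by
  ext i j
  simp only [mpos, mneg, Matrix.sub_apply, of_apply]
  ring

theorem gradient_eq_two_smul_sub {m p : Type*} [Fintype m] [Fintype p]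
    (B₁ B₂ V : Matrix m p ℝ) (A₁ A₂ : Matrix p p ℝ) (D₁ D₂ W₁ W₂ : Matrix m m ℝ) (lam : ℝ) :
    (-2 : ℝ) • B₁ + (-2 : ℝ) • B₂ + (2 : ℝ) • (V * (A₁ + A₂))
        + (2 * lam) • ((D₁ - W₁ + (D₂ - W₂)) * V)
      = (2 : ℝ) • ((mneg B₁ + mneg B₂ + V * (mpos A₁ + mpos A₂) + lam • ((D₁ + D₂) * V))
          - (mpos B₁ + mpos B₂ + V * (mneg A₁ + mneg A₂) + lam • ((W₁ + W₂) * V))) := by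
  conv_lhs => rw [← mpos_sub_mneg B₁, ← mpos_sub_mneg B₂, ← mpos_sub_mneg A₁,
    ← mpos_sub_mneg A₂]
  simp only [Matrix.mul_add, Matrix.mul_sub, Matrix.add_mul, Matrix.sub_mul]
  module

theorem sub_mul_sq_eq_zero_of_eq_mul_sqrt_div {v N D : ℝ} (h : v = v * √(N / D)) :
    (D - N) * v ^ 2 = 0 := by
  rcases eq_or_ne v 0 with hv | hv
  · simp [hv]
  have hsqrt : √(N / D) = 1 := mul_left_cancel₀ hv (by rw [mul_one, ← h])
  have hratio : N / D = 1 := Real.sqrt_eq_one.mp hsqrt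
  have hD : D ≠ 0 := by
    rintro rfl
    simp at hratio
  rw [(div_eq_one_iff_eq hD).mp hratio, sub_self, zero_mul]

theorem multiplicative_update_kkt_general (n k : ℕ)
    (B₁ B₂ : Matrix (Fin n) (Fin k) ℝ)
    (A₁ A₂ : Matrix (Fin k) (Fin k) ℝ)
    (WP WQ : Matrix (Fin n) (Fin n) ℝ)
    (lam : ℝ)
    (LP LQ : Matrix (Fin n) (Fin n) ℝ)
    (hLP : LP = dmat WP - WP) (hLQ : LQ = dmat WQ - WQ)
    (V : Matrix (Fin n) (Fin k) ℝ)
    (hfix : ∀ i j, V i j = V i j * Real.sqrt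
      ((mpos B₁ + mpos B₂ + V * (mneg A₁ + mneg A₂)
          + lam • ((WP + WQ) * V)) i j /
        (mneg B₁ + mneg B₂ + V * (mpos A₁ + mpos A₂)
          + lam • ((dmat WP + dmat WQ) * V)) i j)) :
    ∀ i j,
      ((-2 : ℝ) • B₁ + (-2 : ℝ) • B₂ + (2 : ℝ) • (V * (A₁ + A₂))
          + (2 * lam) • ((LP + LQ) * V)) i j * (V i j) ^ 2 = 0 := by
  intro i j
  rw [hLP, hLQ, gradient_eq_two_smul_sub, Matrix.smul_apply, Matrix.sub_apply, smul_eq_mul,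
    mul_assoc, sub_mul_sq_eq_zero_of_eq_mul_sqrt_div (hfix i j), mul_zero]

/-- Theorem 1 (KKT part): a nonnegative fixed point of the multiplicative update
satisfies the complementary-slackness (KKT) fixed-point equation
(−2B₁ − 2B₂ + 2V(A₁+A₂) + 2λ₂(L_P+L_Q)V)ᵢⱼ · vᵢⱼ² = 0. -/
theorem multiplicative_update_kkt (n k : ℕ)
    (B₁ B₂ : Matrix (Fin n) (Fin k) ℝ)
    (A₁ A₂ : Matrix (Fin k) (Fin k) ℝ) (hA₁ : A₁.IsSymm) (hA₂ : A₂.IsSymm)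
    (WP WQ : Matrix (Fin n) (Fin n) ℝ) (hWP : WP.IsSymm) (hWQ : WQ.IsSymm)
    (hWPnn : ∀ i j, 0 ≤ WP i j) (hWQnn : ∀ i j, 0 ≤ WQ i j)
    (lam : ℝ) (hlam : 0 ≤ lam)
    (LP LQ : Matrix (Fin n) (Fin n) ℝ)
    (hLP : LP = dmat WP - WP) (hLQ : LQ = dmat WQ - WQ)
    (V : Matrix (Fin n) (Fin k) ℝ) (hV : ∀ i j, 0 ≤ V i j)
    (hden : ∀ i j,
      0 < (mneg B₁ + mneg B₂ + V * (mpos A₁ + mpos A₂)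
            + lam • ((dmat WP + dmat WQ) * V)) i j)
    (hfix : ∀ i j, V i j = V i j * Real.sqrt
      ((mpos B₁ + mpos B₂ + V * (mneg A₁ + mneg A₂)
          + lam • ((WP + WQ) * V)) i j /
        (mneg B₁ + mneg B₂ + V * (mpos A₁ + mpos A₂)
          + lam • ((dmat WP + dmat WQ) * V)) i j)) :
    ∀ i j,
      ((-2 : ℝ) • B₁ + (-2 : ℝ) • B₂ + (2 : ℝ) • (V * (A₁ + A₂))
          + (2 * lam) • ((LP + LQ) * V)) i j * (V i j) ^ 2 = 0 :=
  multiplicative_update_kkt_general n k B₁ B₂ A₁ A₂ WP WQ lam LP LQ hLP hLQ V hfix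

end
end
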